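/- Let K be a small category and let F, G : K ⥤ Cat be (strict) functors to the category of categories. Suppose given natural transformations α : F ⟶ G and β : G ⟶ F such that for every object k of K, the functor β_k : G(k) ⥤ F(k) is left adjoint to α_k : F(k) ⥤ G(k), and the adjunctions are compatible with the transition functors. Then the induced functors between the categories of sections (limits) lim F and lim G are adjoint: the functor induced by β is left adjoint to the functor induced by α. -/

import Mathlib

/-!
Model `lim F` by the category of sections of `F`: families `x k ∈ F k` carried to one another by
the transition functors, with componentwise morphisms. On sections, `limMap β` and `limMap α`
act componentwise, and the pointwise units and counits are again morphisms of sections precisely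
because the mate squares commute; the triangle identities then hold componentwise. Transport
along `lim F ≅ Section F` finishes the proof.
-/

open CategoryTheory CategoryTheory.Limits

universe v

namespace CategoryTheory.Cat

variable {K : Type v} [SmallCategory K]

/-- Transition maps hold on the nose: `Cat` is a strict 1-category here, so the compatible
transition isomorphisms of a section are identities. -/
@[ext]
structure Section (F : K ⥤ Cat.{v, v}) where
  obj : ∀ k, F.obj k
  map_obj : ∀ {k l : K} (m : k ⟶ l), (F.map m).toFunctor.obj (obj k) = obj l

namespace Section

variable {F : K ⥤ Cat.{v, v}}

@[ext]
structure Hom (X Y : Section F) where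
  app : ∀ k, X.obj k ⟶ Y.obj k
  map_app : ∀ {k l : K} (m : k ⟶ l), (F.map m).toFunctor.map (app k) =
    eqToHom (X.map_obj m) ≫ app l ≫ eqToHom (Y.map_obj m).symm

instance : Category (Section F) where
  Hom := Hom
  id X := ⟨fun _ => 𝟙 _, fun m => by simp⟩
  comp f g := ⟨fun k => f.app k ≫ g.app k, fun m => by simp [f.map_app, g.map_app]⟩

@[ext]
lemma hom_ext {X Y : Section F} {f g : X ⟶ Y} (h : ∀ k, f.app k = g.app k) : f = g :=
  Hom.ext (funext h)

@[simp]
lemma id_app (X : Section F) (k : K) : Hom.app (𝟙 X) k = 𝟙 (X.obj k) := rfl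

@[simp]
lemma comp_app {X Y Z : Section F} (f : X ⟶ Y) (g : Y ⟶ Z) (k : K) :
    (f ≫ g).app k = f.app k ≫ g.app k := rfl

lemma eqToHom_app {X Y : Section F} (h : X = Y) (k : K) :
    Hom.app (eqToHom h) k = eqToHom (congrArg (·.obj k) h) := by
  subst h; rfl

abbrev eval (k : K) : Section F ⥤ F.obj k where
  obj X := X.obj k
  map f := f.app k

variable (F) in
def cone : Cone F where
  pt := Cat.of (Section F)
  π :=
    { app k := (eval k).toCatHom
      naturality _ _ m := Cat.Hom.ext <| Functor.ext (fun X => (X.map_obj m).symm)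
        fun (X Y : Section F) (f : X ⟶ Y) => by
          change f.app _ = eqToHom _ ≫ (F.map m).toFunctor.map (f.app _) ≫ eqToHom _
          rw [f.map_app]
          simp }

def lift (s : Cone F) : s.pt ⥤ Section F where
  obj x :=
    { obj k := (s.π.app k).toFunctor.obj x
      map_obj m := (Functor.congr_obj congr($(s.w m).toFunctor) x) }
  map f :=
    { app k := (s.π.app k).toFunctor.map f
      map_app m := by
        have := Functor.congr_hom congr($(s.w m).toFunctor) f
        simp only [Hom.comp_toFunctor, Functor.comp_obj, Functor.comp_map,
          Functor.const_obj_obj] at this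
        simp [this] }

lemma functor_ext {C : Type*} [Category C] {P Q : C ⥤ Section F}
    (h : ∀ k, P ⋙ eval k = Q ⋙ eval k) : P = Q := by
  refine Functor.ext (fun x => ?_) (fun x y f => ?_)
  · ext k
    exact Functor.congr_obj (h k) x
  · ext k
    simpa [eqToHom_app] using Functor.congr_hom (h k) f

variable (F) in
def isLimit : IsLimit (cone F) where
  lift s := (lift s).toCatHom
  fac _ _ := rfl
  uniq _ _ w := Cat.Hom.ext <| functor_ext fun k => congr($(w k).toFunctor)

variable {G : K ⥤ Cat.{v, v}}

def map (β : G ⟶ F) : Section G ⥤ Section F where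
  obj X :=
    { obj k := (β.app k).toFunctor.obj (X.obj k)
      map_obj m := by
        rw [← X.map_obj m]
        exact (Functor.congr_obj congr($(β.naturality m).toFunctor) (X.obj _)).symm }
  map {X Y} f :=
    { app k := (β.app k).toFunctor.map (f.app k)
      map_app m := by
        have := Functor.congr_hom congr($(β.naturality m).toFunctor).symm (f.app _)
        simp only [Cat.Hom.comp_toFunctor, Functor.comp_map] at this
        simp [this, f.map_app, eqToHom_map] }

lemma map_comp_π (β : G ⟶ F) (k : K) :
    (⟨map β⟩ : (cone G).pt ⟶ (cone F).pt) ≫ (cone F).π.app k =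
      (cone G).π.app k ≫ β.app k := rfl

lemma limMap_eq (β : G ⟶ F) :
    limMap β = (limit.isoLimitCone ⟨cone G, isLimit G⟩).hom ≫
      (⟨map β⟩ : (cone G).pt ⟶ (cone F).pt) ≫
      (limit.isoLimitCone ⟨cone F, isLimit F⟩).inv := by
  refine limit.hom_ext fun k => ?_
  rw [limMap_π, Category.assoc, Category.assoc, limit.isoLimitCone_inv_π, map_comp_π,
    limit.isoLimitCone_hom_π_assoc]

end Section

variable {F G : K ⥤ Cat.{v, v}} {α : F ⟶ G} {β : G ⟶ F}

def MateCompatible (adj : ∀ k, (β.app k).toFunctor ⊣ (α.app k).toFunctor) : Prop :=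
  ∀ {k l : K} (m : k ⟶ l),
    mateEquiv (adj k) (adj l) (eqToHom congr($(β.naturality m).toFunctor)) =
      eqToHom congr($((α.naturality m).symm).toFunctor)

namespace MateCompatible

variable {adj : ∀ k : K, (β.app k).toFunctor ⊣ (α.app k).toFunctor} (h : MateCompatible adj)
include h

lemma map_unit_app {k l : K} (m : k ⟶ l) {x : G.obj k} {y : G.obj l}
    (hx : (G.map m).toFunctor.obj x = y)
    (hy : (α.app l).toFunctor.obj ((β.app l).toFunctor.obj y) =
      (G.map m).toFunctor.obj ((α.app k).toFunctor.obj ((β.app k).toFunctor.obj x))) :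
    (G.map m).toFunctor.map ((adj k).unit.app x) =
      eqToHom hx ≫ (adj l).unit.app y ≫ eqToHom hy := by
  subst hx
  have H := unit_mateEquiv (adj k) (adj l) (eqToHom congr($(β.naturality m).toFunctor)) x
  rw [h m] at H
  simp only [Functor.id_obj, Functor.comp_obj, Hom.comp_toFunctor, CategoryTheory.eqToHom_app,
    eqToHom_map] at H
  rw [comp_eqToHom_iff] at H
  simp [H]

lemma map_counit_app {k l : K} (m : k ⟶ l) {x : F.obj k} {y : F.obj l}
    (hx : (F.map m).toFunctor.obj x = y)
    (hy : (F.map m).toFunctor.obj ((β.app k).toFunctor.obj ((α.app k).toFunctor.obj x)) =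
      (β.app l).toFunctor.obj ((α.app l).toFunctor.obj y)) :
    (F.map m).toFunctor.map ((adj k).counit.app x) =
      eqToHom hy ≫ (adj l).counit.app y ≫ eqToHom hx.symm := by
  subst hx
  have H := mateEquiv_counit (adj k) (adj l) (eqToHom congr($(β.naturality m).toFunctor)) x
  rw [h m] at H
  simp only [Functor.id_obj, Functor.comp_obj, Hom.comp_toFunctor, CategoryTheory.eqToHom_app,
    eqToHom_map] at H
  rw [eqToHom_comp_iff] at H
  simp [H]

end MateCompatible

namespace Section

variable {adj : ∀ k : K, (β.app k).toFunctor ⊣ (α.app k).toFunctor} (h : MateCompatible adj)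
include h

def unit (X : Section G) : X ⟶ (map α).obj ((map β).obj X) where
  app k := (adj k).unit.app (X.obj k)
  map_app m := h.map_unit_app m (X.map_obj m) _

def counit (Y : Section F) : (map β).obj ((map α).obj Y) ⟶ Y where
  app k := (adj k).counit.app (Y.obj k)
  map_app m := h.map_counit_app m (Y.map_obj m) _

def adjunction : map β ⊣ map α where
  unit :=
    { app X := unit h X
      naturality _ _ f := by ext k; exact (adj k).unit.naturality (f.app k) }
  counit :=
    { app Y := counit h Y
      naturality _ _ f := by ext k; exact (adj k).counit.naturality (f.app k) }
  left_triangle_components X := by ext k; exact (adj k).left_triangle_components (X.obj k)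
  right_triangle_components Y := by ext k; exact (adj k).right_triangle_components (Y.obj k)

end Section

end CategoryTheory.Cat

open CategoryTheory.Cat in
/-- Let `K` be a small category, `F G : K ⥤ Cat`, and `α : F ⟶ G`, `β : G ⟶ F`
natural transformations such that for every `k`, `β.app k` is left adjoint to
`α.app k`, compatibly with the transition functors (the mate squares commute).
Then the induced functor `lim G ⥤ lim F` is left adjoint to the induced functor
`lim F ⥤ lim G`. -/
theorem limit_pointwise_adjunction {K : Type v} [SmallCategory K]
    (F G : K ⥤ Cat.{v, v}) (α : F ⟶ G) (β : G ⟶ F)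
    (adj : ∀ k : K, ((β.app k).toFunctor : (G.obj k : Cat) ⥤ F.obj k) ⊣ ((α.app k).toFunctor : (F.obj k : Cat) ⥤ G.obj k))
    (compat : ∀ {k l : K} (m : k ⟶ l),
      mateEquiv (adj k) (adj l)
          (eqToHom (show ((G.map m).toFunctor ⋙ (β.app l).toFunctor : (G.obj k : Cat) ⥤ F.obj l)
              = (β.app k).toFunctor ⋙ (F.map m).toFunctor from congrArg Cat.Hom.toFunctor (β.naturality m)))
        = eqToHom (show ((α.app k).toFunctor ⋙ (G.map m).toFunctor : (F.obj k : Cat) ⥤ G.obj l)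
              = (F.map m).toFunctor ⋙ (α.app l).toFunctor from congrArg Cat.Hom.toFunctor (α.naturality m).symm)) :
    Nonempty (((limMap β).toFunctor : (limit G : Cat) ⥤ (limit F : Cat)) ⊣
      ((limMap α).toFunctor : (limit F : Cat) ⥤ (limit G : Cat))) := by
  let eG := equivOfIso (limit.isoLimitCone ⟨Section.cone G, Section.isLimit G⟩)
  let eF := equivOfIso (limit.isoLimitCone ⟨Section.cone F, Section.isLimit F⟩)
  have hβ : eG.functor ⋙ Section.map β ⋙ eF.inverse = (limMap β).toFunctor := by
    rw [Section.limMap_eq]; rfl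
  have hα : eF.functor ⋙ Section.map α ⋙ eG.inverse = (limMap α).toFunctor := by
    rw [Section.limMap_eq]; rfl
  let adjSections := eG.toAdjunction.comp ((Section.adjunction @compat).comp eF.symm.toAdjunction)
  exact ⟨(adjSections.ofNatIsoLeft (eqToIso hβ)).ofNatIsoRight (eqToIso hα)⟩
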